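/- arXiv:2211.15514 — 4 statements merged into one kernel-verified Lean document; each statement's English description precedes it below -/
import Mathlib

section
/- Let (X, d) be a metric space, η > 0, and define d_η((q₀, w₀), (q₁, w₁)) = min{ d(q₀, q₁) + η·|w₀ − w₁|, η·(w₀ + w₁) } on X × ℝ≥0. If w₀ > 0, w₁ > 0 and d(q₀, q₁) ≤ 2η·min(w₀, w₁), then d_η((q₀, w₀), (q₁, w₁)) = d(q₀, q₁) + η·|w₀ − w₁|. In particular, for any fixed q₀, q₁ and w₀, w₁ > 0, this formula holds for all sufficiently large η. -/
/-- The weighted-shape distance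
`d_η((q₀,w₀),(q₁,w₁)) = min (d(q₀,q₁) + η|w₀-w₁|) (η(w₀+w₁))`,
written on pairs with real weights. -/
noncomputable def deta {X : Type*} [MetricSpace X] (η : ℝ)
    (p q : X × ℝ) : ℝ :=
  min (dist p.1 q.1 + η * |p.2 - q.2|) (η * (p.2 + q.2))

/-- If `w₀, w₁ > 0` and `d(q₀,q₁) ≤ 2η·min(w₀,w₁)` (which holds for all
sufficiently large `η` once `w₀, w₁ > 0` are fixed), then
`d_η((q₀,w₀),(q₁,w₁)) = d(q₀,q₁) + η|w₀ - w₁|`. -/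
theorem deta_eq_product_of_large_eta {X : Type*} [MetricSpace X]
    {η : ℝ} (hη : 0 < η) (q₀ q₁ : X) {w₀ w₁ : ℝ}
    (hw₀ : 0 < w₀) (hw₁ : 0 < w₁)
    (hd : dist q₀ q₁ ≤ 2 * η * min w₀ w₁) :
    deta η (q₀, w₀) (q₁, w₁) = dist q₀ q₁ + η * |w₀ - w₁| := by
  have h : dist q₀ q₁ + η * |w₀ - w₁| ≤ η * (w₀ + w₁) := by
    have habs : |w₀ - w₁| = w₀ + w₁ - 2 * min w₀ w₁ := by
      rcases le_total w₀ w₁ with h | h <;>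
        simp [abs_sub_comm, abs_of_nonneg, abs_of_nonpos, sub_nonneg.mpr h,
          sub_nonpos.mpr h, min_eq_left h, min_eq_right h] <;> ring
    nlinarith
  simpa [deta] using h
end

section
/- Let (X, d) be a metric space, η > 0, and define d_η((q₀, w₀), (q₁, w₁)) = min{ d(q₀, q₁) + η·|w₀ − w₁|, η·(w₀ + w₁) } on X × ℝ≥0. Suppose w₀ > 0, w₁ > 0 and d(q₀, q₁) ≤ 2η·min(w₀, w₁). Let q : [0,1] → X be a geodesic from q₀ to q₁ (d(q(s), q(t)) = (t − s)·d(q₀, q₁) for 0 ≤ s ≤ t ≤ 1) and let w(u) = (1 − u)·w₀ + u·w₁. Then the path u ↦ (q(u), w(u)) is a geodesic for d_η: for all 0 ≤ s ≤ t ≤ 1, d_η((q(s), w(s)), (q(t), w(t))) = (t − s)·d_η((q₀, w₀), (q₁, w₁)). -/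
/-- If `w₀, w₁ > 0`, `d(q₀,q₁) ≤ 2η·min(w₀,w₁)`, `q` is a geodesic in `X` from
`q₀` to `q₁` and `w(u) = (1-u)w₀ + u·w₁`, then `u ↦ (q u, w u)` is a geodesic
for `d_η`. -/
theorem deta_geodesic_product_case {X : Type*} [MetricSpace X]
    {η : ℝ} (hη : 0 < η) {q₀ q₁ : X} {w₀ w₁ : ℝ}
    (hw₀ : 0 < w₀) (hw₁ : 0 < w₁)
    (hd : dist q₀ q₁ ≤ 2 * η * min w₀ w₁)
    (q : ℝ → X) (hq0 : q 0 = q₀) (hq1 : q 1 = q₁)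
    (hgeo : ∀ s t : ℝ, 0 ≤ s → s ≤ t → t ≤ 1 →
      dist (q s) (q t) = (t - s) * dist q₀ q₁) :
    ∀ s t : ℝ, 0 ≤ s → s ≤ t → t ≤ 1 →
      deta η (q s, (1 - s) * w₀ + s * w₁) (q t, (1 - t) * w₀ + t * w₁)
        = (t - s) * deta η (q₀, w₀) (q₁, w₁) := by

  intro s t hs hst ht
  have hm : 2 * η * min w₀ w₁ = η * (w₀ + w₁) - η * |w₀ - w₁| := by
    rcases le_total w₀ w₁ with h | h
    · rw [min_eq_left h, abs_of_nonpos (by linarith)]; ring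
    · rw [min_eq_right h, abs_of_nonneg (by linarith)]; ring
  have hD : dist q₀ q₁ + η * |w₀ - w₁| ≤ η * (w₀ + w₁) := by
    rw [hm] at hd; linarith
  have habs : |((1 - s) * w₀ + s * w₁) - ((1 - t) * w₀ + t * w₁)|
      = (t - s) * |w₀ - w₁| := by
    have : ((1 - s) * w₀ + s * w₁) - ((1 - t) * w₀ + t * w₁)
        = (t - s) * (w₀ - w₁) := by ring
    rw [this, abs_mul, abs_of_nonneg (by linarith)]
  have hdist := hgeo s t hs hst ht
  have hts : (0:ℝ) ≤ t - s := by linarith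
  have habs0 : (0:ℝ) ≤ |w₀ - w₁| := abs_nonneg _
  unfold deta
  simp only
  rw [habs, hdist, min_eq_left hD, min_eq_left ?_]
  · ring
  · nlinarith [mul_le_mul_of_nonneg_left hD hts,
      mul_nonneg (mul_nonneg hη.le (by linarith : (0:ℝ) ≤ 1 - t)) hw₀.le,
      mul_nonneg (mul_nonneg hη.le hs) hw₁.le]
end

section
/- Let (X, d) be a metric space, η > 0, and define d_η((q₀, w₀), (q₁, w₁)) = min{ d(q₀, q₁) + η·|w₀ − w₁|, η·(w₀ + w₁) } on X × ℝ≥0. Fix q₀ ∈ X and w₀ > 0, and let γ(u) = (q₀, (1 − u)·w₀). Then for all 0 ≤ s ≤ t ≤ 1, d_η(γ(s), γ(t)) = (t − s)·η·w₀ = (t − s)·d_η((q₀, w₀), (q₀, 0)); i.e., linearly shrinking the weight to zero while keeping the shape fixed is a geodesic for d_η. -/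
/-- Linearly shrinking the weight to zero while keeping the shape fixed,
`γ(u) = (q₀, (1-u)·w₀)`, is a geodesic for `d_η`: for `0 ≤ s ≤ t ≤ 1`,
`d_η(γ s, γ t) = (t-s)·η·w₀ = (t-s)·d_η((q₀,w₀),(q₀,0))`. -/
theorem deta_shrink_weight_geodesic {X : Type*} [MetricSpace X]
    {η : ℝ} (hη : 0 < η) (q₀ : X) {w₀ : ℝ} (hw₀ : 0 < w₀) :
    ∀ s t : ℝ, 0 ≤ s → s ≤ t → t ≤ 1 →
      deta η (q₀, (1 - s) * w₀) (q₀, (1 - t) * w₀) = (t - s) * (η * w₀) ∧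
      (t - s) * (η * w₀) = (t - s) * deta η (q₀, w₀) (q₀, 0) := by
  intro s t hs hst ht
  have habs : |(1 - s) * w₀ - (1 - t) * w₀| = (t - s) * w₀ := by
    rw [abs_of_nonneg (by nlinarith)]; ring
  constructor
  · simp only [deta, dist_self, habs, zero_add]
    rw [min_eq_left (by nlinarith [mul_pos hη hw₀])]; ring
  · simp only [deta, dist_self, sub_zero, add_zero, zero_add]
    rw [abs_of_nonneg hw₀.le, min_self]
end

section
/- Let (X, d) be a metric space, η > 0, and define d_η((q₀, w₀), (q₁, w₁)) = min{ d(q₀, q₁) + η·|w₀ − w₁|, η·(w₀ + w₁) } on X × ℝ≥0. Suppose 0 < w₀ ≤ w₁, and suppose η·(w₀ + w₁) ≤ d(q₀, q₁) + η·|w₀ − w₁| (so d_η((q₀, w₀), (q₁, w₁)) = η·(w₀ + w₁)). Set α = w₀/(w₀ + w₁) and define the piecewise path γ : [0,1] → X × ℝ≥0 by γ(u) = (q₀, w₀ − u·(w₀ + w₁)) for u ∈ [0, α] and γ(u) = (q₁, (u − 1)·w₀ + u·w₁) for u ∈ (α, 1]. Then for all 0 ≤ s ≤ t ≤ 1, d_η(γ(s),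 γ(t)) ≤ (t − s)·η·(w₀ + w₁); consequently γ is a geodesic from (q₀, w₀) to (q₁, w₁) for d_η, i.e., d_η(γ(s), γ(t)) = (t − s)·d_η((q₀, w₀), (q₁, w₁)) for all 0 ≤ s ≤ t ≤ 1. -/
/-- Case (b) of the geodesic construction: if `0 < w₀ ≤ w₁` and the distance
`d_η((q₀,w₀),(q₁,w₁))` is realized by `η(w₀+w₁)`, then the piecewise path that
shrinks the weight of `q₀` to zero on `[0, α]` (`α = w₀/(w₀+w₁)`) and then grows
the weight of `q₁` on `(α, 1]` satisfies
`d_η(γ s, γ t) ≤ (t-s)·η·(w₀+w₁)` for all `0 ≤ s ≤ t ≤ 1`; consequently it is a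
geodesic from `(q₀,w₀)` to `(q₁,w₁)`. -/
theorem deta_quotient_case_geodesic {X : Type*} [MetricSpace X]
    {η : ℝ} (hη : 0 < η) (q₀ q₁ : X) {w₀ w₁ : ℝ}
    (hw₀ : 0 < w₀) (hw : w₀ ≤ w₁)
    (hreal : η * (w₀ + w₁) ≤ dist q₀ q₁ + η * |w₀ - w₁|) :
    let α : ℝ := w₀ / (w₀ + w₁)
    let γ : ℝ → X × ℝ := fun u =>
      if u ≤ α then (q₀, w₀ - u * (w₀ + w₁)) else (q₁, (u - 1) * w₀ + u * w₁)
    ∀ s t : ℝ, 0 ≤ s → s ≤ t → t ≤ 1 →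
      deta η (γ s) (γ t) ≤ (t - s) * (η * (w₀ + w₁)) ∧
      deta η (γ s) (γ t) = (t - s) * deta η (q₀, w₀) (q₁, w₁) := by
  intro α γ s t hs hst ht
  have hW : 0 < w₀ + w₁ := by linarith
  have habs : |w₀ - w₁| = w₁ - w₀ := by rw [abs_of_nonpos] <;> linarith
  rw [habs] at hreal
  have hd : 2 * (η * w₀) ≤ dist q₀ q₁ := by nlinarith [hreal]
  have hval : deta η (q₀, w₀) (q₁, w₁) = η * (w₀ + w₁) := by
    simp only [deta]
    rw [habs]
    exact min_eq_right hreal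
  have key : deta η (γ s) (γ t) = (t - s) * (η * (w₀ + w₁)) := by
    by_cases hsα : s ≤ α
    · by_cases htα : t ≤ α
      · have htW : t * (w₀ + w₁) ≤ w₀ := by
          rw [← le_div_iff₀ hW]; exact htα
        simp only [γ, deta, if_pos hsα, if_pos htα, dist_self, zero_add]
        have h1 : |w₀ - s * (w₀ + w₁) - (w₀ - t * (w₀ + w₁))| = (t - s) * (w₀ + w₁) := by
          rw [show w₀ - s * (w₀ + w₁) - (w₀ - t * (w₀ + w₁)) = (t - s) * (w₀ + w₁) by ring]
          exact abs_of_nonneg (by nlinarith)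
        rw [h1, min_eq_left (by nlinarith)]
        ring
      · push_neg at htα
        have hsW : s * (w₀ + w₁) ≤ w₀ := by rw [← le_div_iff₀ hW]; exact hsα
        have htW : w₀ ≤ t * (w₀ + w₁) := by rw [← div_le_iff₀ hW]; exact htα.le
        simp only [γ, deta, if_pos hsα, if_neg (not_le.mpr htα)]
        have ha : 0 ≤ w₀ - s * (w₀ + w₁) := by linarith
        have hb : 0 ≤ (t - 1) * w₀ + t * w₁ := by nlinarith
        rw [min_eq_right ?_]
        · ring_nf
        · nlinarith [mul_le_mul_of_nonneg_left
            (neg_abs_le (w₀ - s * (w₀ + w₁) - ((t - 1) * w₀ + t * w₁))) hη.le, hd,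
            mul_nonneg (mul_nonneg hη.le hs) hW.le]
    · push_neg at hsα
      have hsW : w₀ ≤ s * (w₀ + w₁) := by rw [← div_le_iff₀ hW]; exact hsα.le
      have htα : ¬ t ≤ α := by push_neg; linarith
      simp only [γ, deta, if_neg (not_le.mpr hsα), if_neg htα, dist_self, zero_add]
      have h1 : |(s - 1) * w₀ + s * w₁ - ((t - 1) * w₀ + t * w₁)| = (t - s) * (w₀ + w₁) := by
        rw [show (s - 1) * w₀ + s * w₁ - ((t - 1) * w₀ + t * w₁) = -((t - s) * (w₀ + w₁)) by ring,
          abs_neg]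
        exact abs_of_nonneg (by nlinarith)
      rw [h1, min_eq_left (by nlinarith)]
      ring
  exact ⟨key.le, by rw [key, hval]⟩
end
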